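/- Let G be a finite tree on at least 2 vertices and let φ be an eigenvector of the Laplacian matrix L = D − A with eigenvalue λ₂(G), normalized so that Σ_{v ∈ V} φ(v)² = 1. Then the positive part of φ satisfies Σ_{v ∈ V} max{φ(v), 0} ≥ diam(G)^{1/2} / 8, and likewise Σ_{v ∈ V} max{−φ(v), 0} ≥ diam(G)^{1/2} / 8. -/

import Mathlib

/-!
Write `E(f) = ∑_{uv ∈ E} (f u - f v)² = fᵀ L f` and `R = max φ - min φ`. Since `∑ φ = 0`, the
positive and negative parts of `φ` have the same mass `S`, and `1 = ∑ φ² ≤ R S`. Telescoping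
`φ` along a geodesic between its extreme points with Cauchy–Schwarz gives
`R² ≤ diam · E(φ) = diam · λ₂`.
Conversely, for a diametral pair `x, y` of the tree the test function `d(x, ·) - d(y, ·)` changes
only across the edges of the `x`–`y` path, by `±2`, so its energy is at most `4 diam` while its
variance is at least `diam³ / 3`; the Rayleigh quotient bound gives `λ₂ diam² ≤ 12`. Hence
`R √diam ≤ √12 < 8` and `√diam ≤ 8 S`.
-/

open Matrix

/-- `(l, φ)` is an eigenpair of the (combinatorial) graph Laplacian `L = D - A`. -/
def SimpleGraph.IsLapEigenpair {V : Type*} [Fintype V] [DecidableEq V]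
    (G : SimpleGraph V) [DecidableRel G.Adj] (l : ℝ) (φ : V → ℝ) : Prop :=
  φ ≠ 0 ∧ G.lapMatrix ℝ *ᵥ φ = l • φ

/-- `l` is the second-smallest eigenvalue `λ₂(G)` of the Laplacian of a connected graph,
i.e. its smallest positive eigenvalue. -/
def SimpleGraph.IsSecondLapEigenvalue {V : Type*} [Fintype V] [DecidableEq V]
    (G : SimpleGraph V) [DecidableRel G.Adj] (l : ℝ) : Prop :=
  (∃ φ, G.IsLapEigenpair l φ) ∧ 0 < l ∧
    ∀ μ : ℝ, 0 < μ → (∃ ψ, G.IsLapEigenpair μ ψ) → l ≤ μ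

open Finset

theorem EuclideanSpace.real_inner_eq_dotProduct {n : Type*} [Fintype n]
    (x y : EuclideanSpace ℝ n) : inner ℝ x y = ⇑x ⬝ᵥ ⇑y := by
  rw [EuclideanSpace.inner_eq_star_dotProduct, star_trivial, dotProduct_comm]

namespace Matrix.IsHermitian

variable {n : Type*} [Fintype n] [DecidableEq n] {A : Matrix n n ℝ}

theorem dotProduct_mulVec_eq_sum_eigenvalues (hA : A.IsHermitian) (f : n → ℝ) :
    f ⬝ᵥ (A *ᵥ f) = ∑ i, hA.eigenvalues i * (⇑(hA.eigenvectorBasis i) ⬝ᵥ f) ^ 2 := by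
  have hsymm : Aᵀ = A := by simpa using hA.eq
  have := (hA.eigenvectorBasis).sum_inner_mul_inner (WithLp.toLp 2 f) (WithLp.toLp 2 (A *ᵥ f))
  simp only [EuclideanSpace.real_inner_eq_dotProduct] at this
  rw [← this]
  refine sum_congr rfl fun i _ => ?_
  rw [dotProduct_mulVec, ← mulVec_transpose, hsymm,
    hA.mulVec_eigenvectorBasis, smul_dotProduct, smul_eq_mul, dotProduct_comm f]
  ring

theorem mul_dotProduct_self_le (hA : A.IsHermitian) {l : ℝ} (f : n → ℝ)
    (h : ∀ i, ⇑(hA.eigenvectorBasis i) ⬝ᵥ f ≠ 0 → l ≤ hA.eigenvalues i) :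
    l * (f ⬝ᵥ f) ≤ f ⬝ᵥ (A *ᵥ f) := by
  have hnorm : f ⬝ᵥ f = ∑ i, (⇑(hA.eigenvectorBasis i) ⬝ᵥ f) ^ 2 := by
    have := (hA.eigenvectorBasis).sum_sq_inner_right (WithLp.toLp 2 f)
    simp only [← real_inner_self_eq_norm_sq, EuclideanSpace.real_inner_eq_dotProduct] at this
    exact this.symm
  rw [hA.dotProduct_mulVec_eq_sum_eigenvalues, hnorm, mul_sum]
  refine sum_le_sum fun i _ => ?_
  by_cases hi : ⇑(hA.eigenvectorBasis i) ⬝ᵥ f = 0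
  · simp [hi]
  · exact mul_le_mul_of_nonneg_right (h i hi) (sq_nonneg _)

end Matrix.IsHermitian

theorem add_sq_le_succ_mul_add_sq {a b n E : ℝ} (hn : 0 ≤ n) (hE : 0 ≤ E)
    (hb : b ^ 2 ≤ n * E) : (a + b) ^ 2 ≤ (n + 1) * (a ^ 2 + E) := by
  rcases hn.eq_or_lt with rfl | hn
  · have hb0 : b = 0 := pow_eq_zero_iff two_ne_zero |>.1 (by nlinarith [sq_nonneg b])
    subst hb0
    nlinarith
  · -- `n ((n + 1) (a² + E) - (a + b)²) = (n a - b)² + (n + 1) (n E - b²)`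
    refine le_of_mul_le_mul_left ?_ hn
    nlinarith [sq_nonneg (n * a - b)]

theorem sum_max_neg_zero_eq_sum_max_zero {ι : Type*} [Fintype ι] {φ : ι → ℝ}
    (h : ∑ i, φ i = 0) : ∑ i, max (-φ i) 0 = ∑ i, max (φ i) 0 := by
  rw [eq_comm, ← sub_eq_zero, ← sum_sub_distrib]
  simpa using h

theorem sum_sq_le_mul_sum_max_zero {ι : Type*} [Fintype ι] {φ : ι → ℝ} {m M : ℝ}
    (hsum : ∑ i, φ i = 0) (hM : ∀ i, φ i ≤ M) (hm : ∀ i, m ≤ φ i) :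
    ∑ i, φ i ^ 2 ≤ (M - m) * ∑ i, max (φ i) 0 := by
  calc ∑ i, φ i ^ 2 ≤ ∑ i, (M * max (φ i) 0 + -m * max (-φ i) 0) := by
        refine sum_le_sum fun i _ => ?_
        rcases le_total 0 (φ i) with h | h
        · rw [max_eq_left h, max_eq_right (neg_nonpos.2 h)]
          nlinarith [hM i]
        · rw [max_eq_right h, max_eq_left (neg_nonneg.2 h)]
          nlinarith [hm i]
    _ = (M - m) * ∑ i, max (φ i) 0 := by
        rw [sum_add_distrib, ← mul_sum, ← mul_sum, sum_max_neg_zero_eq_sum_max_zero hsum]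
        ring

theorem sum_range_two_mul_sub_sq (m : ℕ) (a : ℝ) :
    ∑ i ∈ range m, (2 * (i : ℝ) - a) ^ 2 =
      2 * m * (m - 1) * (2 * m - 1) / 3 - 2 * a * m * (m - 1) + m * a ^ 2 := by
  induction m with
  | zero => simp
  | succ m ih =>
    rw [sum_range_succ, ih]
    push_cast
    ring

namespace SimpleGraph

variable {V : Type*} {G : SimpleGraph V}

def gradSq (f : V → ℝ) : Sym2 V → ℝ :=
  Sym2.lift ⟨fun a b => (f a - f b) ^ 2, fun a b => by ring⟩

@[simp]
theorem gradSq_mk (f : V → ℝ) (a b : V) : gradSq f s(a, b) = (f a - f b) ^ 2 := rfl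

theorem gradSq_nonneg (f : V → ℝ) (e : Sym2 V) : 0 ≤ gradSq f e := by
  induction e using Sym2.ind with
  | h a b => exact sq_nonneg _

theorem Walk.sq_sub_le_length_mul_sum_gradSq (f : V → ℝ) {u v : V} (q : G.Walk u v) :
    (f u - f v) ^ 2 ≤ q.length * (q.edges.map (gradSq f)).sum := by
  induction q with
  | nil => simp
  | @cons u w v h q ih =>
    have hE : 0 ≤ (q.edges.map (gradSq f)).sum :=
      List.sum_nonneg fun x hx => by
        obtain ⟨e, -, rfl⟩ := List.mem_map.1 hx
        exact gradSq_nonneg f e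
    simp only [Walk.edges_cons, List.map_cons, List.sum_cons, gradSq_mk, Walk.length_cons]
    push_cast
    rw [show f u - f v = (f u - f w) + (f w - f v) by ring]
    exact add_sq_le_succ_mul_add_sq (Nat.cast_nonneg _) hE ih

theorem Walk.dist_lt_of_mem_support {x u w : V} {q : G.Walk x u} (hq : q.length = G.dist x u)
    (hw : w ∈ q.support) (hne : w ≠ u) : G.dist x w < G.dist x u := by
  classical
  have hlen := congrArg Walk.length (q.take_spec hw)
  rw [Walk.length_append] at hlen
  have hdrop : (q.dropUntil w hw).length ≠ 0 := fun h => hne (Walk.eq_of_length_eq_zero h)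
  have := dist_le (q.takeUntil w hw)
  omega

theorem IsBridge.mem_edges_of_dist_le (hG : G.Connected) {u v x y : V}
    (hb : G.IsBridge s(u, v)) (hx : G.dist x u ≤ G.dist x v) (hy : G.dist y v ≤ G.dist y u)
    (p : G.Walk x y) : s(u, v) ∈ p.edges := by
  have huv : u ≠ v := by
    rintro rfl
    simpa using isBridge_iff_forall_walk_mem_edges.1 hb Walk.nil
  obtain ⟨qx, hqx⟩ := hG.exists_walk_length_eq_dist x u
  obtain ⟨qy, hqy⟩ := hG.exists_walk_length_eq_dist y v
  have hmem := isBridge_iff_forall_walk_mem_edges.1 hb (qx.reverse.append (p.append qy))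
  simp only [Walk.edges_append, Walk.edges_reverse, List.mem_append, List.mem_reverse] at hmem
  rcases hmem with hex | hep | hey
  · exact absurd (Walk.dist_lt_of_mem_support hqx (qx.snd_mem_support_of_mem_edges hex)
      huv.symm) hx.not_gt
  · exact hep
  · exact absurd (Walk.dist_lt_of_mem_support hqy (qy.fst_mem_support_of_mem_edges hey) huv)
      hy.not_gt

theorem IsTree.dist_eq_add_one_or (hT : G.IsTree) {u v : V} (h : G.Adj u v) (x : V) :
    G.dist x v = G.dist x u + 1 ∨ G.dist x u = G.dist x v + 1 := by
  have hb : G.IsBridge s(u, v) := isAcyclic_iff_forall_adj_isBridge.1 hT.isAcyclic h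
  have hne : G.dist x u ≠ G.dist x v := fun he =>
    List.not_mem_nil (IsBridge.mem_edges_of_dist_le hT.connected hb he.le he.ge Walk.nil)
  have := h.diff_dist_adj (u := x)
  omega

theorem Walk.dist_getVert {u v : V} {p : G.Walk u v} (hp : p.length = G.dist u v) {i : ℕ}
    (hi : i ≤ p.length) : G.dist u (p.getVert i) = i ∧ G.dist (p.getVert i) v = p.length - i := by
  have htake := length_eq_dist_of_subwalk hp (p.isSubwalk_take i)
  have hdrop := length_eq_dist_of_subwalk hp (p.isSubwalk_drop i)
  rw [Walk.take_length, min_eq_left hi] at htake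
  rw [Walk.drop_length] at hdrop
  exact ⟨htake.symm, hdrop.symm⟩

theorem Walk.IsPath.sum_getVert_le [Fintype V] {u v : V} {p : G.Walk u v} (hp : p.IsPath)
    (F : V → ℝ) (hF : ∀ w, 0 ≤ F w) : ∑ i ∈ range (p.length + 1), F (p.getVert i) ≤ ∑ w, F w := by
  classical
  have hinj : Set.InjOn p.getVert (range (p.length + 1)) := fun i hi j hj h =>
    hp.getVert_injOn (Nat.lt_succ_iff.1 (mem_range.1 hi)) (Nat.lt_succ_iff.1 (mem_range.1 hj)) h
  rw [← sum_image hinj]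
  exact sum_le_sum_of_subset_of_nonneg (subset_univ _) fun w _ _ => hF w

variable (G) in
noncomputable def distDiff (x y v : V) : ℝ := G.dist x v - G.dist y v

theorem IsTree.gradSq_distDiff_le [DecidableEq V] (hT : G.IsTree) {x y u v : V} (p : G.Walk x y)
    (huv : G.Adj u v) :
    gradSq (G.distDiff x y) s(u, v) ≤ if s(u, v) ∈ p.edges then 4 else 0 := by
  have hb := isAcyclic_iff_forall_adj_isBridge.1 hT.isAcyclic huv
  have hb' := isAcyclic_iff_forall_adj_isBridge.1 hT.isAcyclic huv.symm
  rcases hT.dist_eq_add_one_or huv x with hx | hx <;>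
    rcases hT.dist_eq_add_one_or huv y with hy | hy
  · simp only [gradSq_mk, distDiff, hx, hy]
    split_ifs <;> norm_num
  · rw [if_pos (hb.mem_edges_of_dist_le hT.connected (by omega) (by omega) p)]
    simp only [gradSq_mk, distDiff, hx, hy]
    push_cast
    exact le_of_eq (by ring)
  · rw [Sym2.eq_swap, if_pos (hb'.mem_edges_of_dist_le hT.connected (by omega) (by omega) p)]
    simp only [gradSq_mk, distDiff, hx, hy]
    push_cast
    exact le_of_eq (by ring)
  · simp only [gradSq_mk, distDiff, hx, hy]
    split_ifs <;> norm_num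

theorem cube_div_three_le_sum_sq_distDiff_sub [Fintype V] {x y : V} {p : G.Walk x y}
    (hp : p.length = G.dist x y) (c : ℝ) :
    (p.length : ℝ) ^ 3 / 3 ≤ ∑ v, (G.distDiff x y v - c) ^ 2 := by
  have hval : ∀ i ∈ range (p.length + 1),
      G.distDiff x y (p.getVert i) - c = 2 * i - (p.length + c) := by
    intro i hi
    have hi : i ≤ p.length := Nat.lt_succ_iff.1 (mem_range.1 hi)
    obtain ⟨h₁, h₂⟩ := Walk.dist_getVert hp hi
    rw [distDiff, dist_comm (u := y), h₁, h₂, Nat.cast_sub hi]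
    ring
  calc (p.length : ℝ) ^ 3 / 3 ≤ ∑ i ∈ range (p.length + 1), (2 * (i : ℝ) - (p.length + c)) ^ 2 := by
        rw [sum_range_two_mul_sub_sq, ← sub_nonneg]
        push_cast
        have : 0 ≤ (p.length : ℝ) ^ 2 + 2 * p.length / 3 + (p.length + 1) * c ^ 2 := by positivity
        convert this using 1
        ring
    _ = ∑ i ∈ range (p.length + 1), (G.distDiff x y (p.getVert i) - c) ^ 2 :=
        sum_congr rfl fun i hi => by rw [hval i hi]
    _ ≤ ∑ v, (G.distDiff x y v - c) ^ 2 :=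
        (p.isPath_of_length_eq_dist hp).sum_getVert_le (fun v => (G.distDiff x y v - c) ^ 2)
          fun v => sq_nonneg _

section Energy

variable [Fintype V] [DecidableRel G.Adj]

variable (G) in
def dirichletEnergy (f : V → ℝ) : ℝ := ∑ e ∈ G.edgeFinset, gradSq f e

theorem dirichletEnergy_sub_const (f : V → ℝ) (c : ℝ) :
    G.dirichletEnergy (fun v => f v - c) = G.dirichletEnergy f := by
  refine sum_congr rfl fun e _ => ?_
  induction e using Sym2.ind with
  | h a b => simp only [gradSq_mk]; ring

variable [DecidableEq V]

variable (G) in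
theorem sum_adj_eq_two_mul_sum_edgeFinset (h : Sym2 V → ℝ) :
    ∑ i, ∑ j, (if G.Adj i j then h s(i, j) else 0) = 2 * ∑ e ∈ G.edgeFinset, h e := by
  have hdarts : ∑ i, ∑ j, (if G.Adj i j then h s(i, j) else 0) = ∑ d : G.Dart, h d.edge := by
    rw [← Fintype.sum_prod_type', ← sum_filter]
    exact sum_bij' (fun x hx => ⟨x, (mem_filter.1 hx).2⟩) (fun d _ => d.toProd)
      (by simp) (by simp [Dart.adj]) (by simp) (by simp) (by simp)
  rw [hdarts, ← sum_fiberwise_of_maps_to (g := Dart.edge) (t := G.edgeFinset)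
    (fun d _ => G.mem_edgeFinset.2 d.edge_mem), mul_sum]
  refine sum_congr rfl fun e he => ?_
  rw [sum_congr rfl fun d hd => congrArg h (mem_filter.1 hd).2, sum_const,
    G.dart_edge_fiber_card e (G.mem_edgeFinset.1 he), two_nsmul, two_mul]

variable (G) in
theorem dotProduct_lapMatrix_mulVec (f : V → ℝ) :
    f ⬝ᵥ (G.lapMatrix ℝ *ᵥ f) = G.dirichletEnergy f := by
  rw [← toLinearMap₂'_apply', lapMatrix_toLinearMap₂']
  exact (div_eq_iff two_ne_zero).2 <| by
    rw [mul_comm]; exact G.sum_adj_eq_two_mul_sum_edgeFinset (gradSq f)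

theorem Walk.IsPath.sum_gradSq_le_dirichletEnergy (f : V → ℝ) {u v : V} {q : G.Walk u v}
    (hq : q.IsPath) : (q.edges.map (gradSq f)).sum ≤ G.dirichletEnergy f := by
  rw [← List.sum_toFinset _ hq.isTrail.edges_nodup]
  refine sum_le_sum_of_subset_of_nonneg (fun e he => ?_) fun e _ _ => gradSq_nonneg f e
  exact G.mem_edgeFinset.2 (q.edges_subset_edgeSet (List.mem_toFinset.1 he))


theorem Connected.sq_sub_le_diam_mul_dirichletEnergy (hG : G.Connected) (f : V → ℝ) (a b : V) :
    (f a - f b) ^ 2 ≤ G.diam * G.dirichletEnergy f := by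
  have := hG.nonempty
  obtain ⟨q, hq, hlen⟩ := hG.exists_path_of_dist a b
  have hdiam : q.length ≤ G.diam := hlen ▸ dist_le_diam (connected_iff_ediam_ne_top.1 hG)
  calc (f a - f b) ^ 2 ≤ q.length * (q.edges.map (gradSq f)).sum :=
        q.sq_sub_le_length_mul_sum_gradSq f
    _ ≤ G.diam * G.dirichletEnergy f :=
      mul_le_mul (by exact_mod_cast hdiam) (hq.sum_gradSq_le_dirichletEnergy f)
        (List.sum_nonneg fun x hx => by
          obtain ⟨e, -, rfl⟩ := List.mem_map.1 hx
          exact gradSq_nonneg f e)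
        (Nat.cast_nonneg _)

theorem IsTree.dirichletEnergy_distDiff_le (hT : G.IsTree) {x y : V} (p : G.Walk x y) :
    G.dirichletEnergy (G.distDiff x y) ≤ 4 * p.length := by
  calc G.dirichletEnergy (G.distDiff x y)
      ≤ ∑ e ∈ G.edgeFinset, if e ∈ p.edges then (4 : ℝ) else 0 := by
        refine sum_le_sum fun e he => ?_
        induction e using Sym2.ind with
        | h u v => exact hT.gradSq_distDiff_le p (G.mem_edgeFinset.1 he)
    _ = 4 * #{e ∈ G.edgeFinset | e ∈ p.edges} := by
        rw [sum_ite, sum_const_zero, add_zero, sum_const, nsmul_eq_mul, mul_comm]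
    _ ≤ 4 * p.length := by
        have : #{e ∈ G.edgeFinset | e ∈ p.edges} ≤ p.length :=
          calc #{e ∈ G.edgeFinset | e ∈ p.edges} ≤ #p.edges.toFinset :=
                card_le_card fun e he => List.mem_toFinset.2 (mem_filter.1 he).2
            _ ≤ p.edges.length := List.toFinset_card_le _
            _ = p.length := p.length_edges
        gcongr

theorem IsSecondLapEigenvalue.mul_sum_sq_le_dirichletEnergy {l : ℝ} (hG : G.Connected)
    (hl : G.IsSecondLapEigenvalue l) {f : V → ℝ} (hf : ∑ v, f v = 0) :
    l * ∑ v, f v ^ 2 ≤ G.dirichletEnergy f := by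
  have hA := G.isHermitian_lapMatrix ℝ
  rw [← dotProduct_lapMatrix_mulVec, show ∑ v, f v ^ 2 = f ⬝ᵥ f by simp [dotProduct, sq]]
  refine hA.mul_dotProduct_self_le f fun i hi => ?_
  have hb := hA.mulVec_eigenvectorBasis i
  refine hl.2.2 _ (((posSemidef_lapMatrix ℝ G).eigenvalues_nonneg i).lt_of_ne fun h0 => hi ?_)
    ⟨_, fun h => hi (by rw [h, zero_dotProduct]), hb⟩
  -- An eigenvector for the eigenvalue `0` of a connected graph is constant, hence `⊥ f`.
  have hconst := (lapMatrix_mulVec_eq_zero_iff_forall_reachable G).1 (by rw [hb, ← h0, zero_smul])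
  obtain ⟨u⟩ := hG.nonempty
  rw [dotProduct, sum_congr rfl fun v _ => by rw [hconst v u (hG.preconnected v u)], ← mul_sum,
    hf, mul_zero]

theorem IsLapEigenpair.sum_eq_zero {l : ℝ} {φ : V → ℝ} (h : G.IsLapEigenpair l φ) (hl : l ≠ 0) :
    ∑ v, φ v = 0 := by
  have h1 : (fun _ => (1 : ℝ)) ⬝ᵥ (G.lapMatrix ℝ *ᵥ φ) = 0 := by
    rw [dotProduct_mulVec, ← mulVec_transpose, (G.isSymm_lapMatrix ℝ).eq,
      lapMatrix_mulVec_const_eq_zero, zero_dotProduct]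
  rw [h.2, dotProduct_smul, smul_eq_mul] at h1
  simpa [dotProduct, hl] using h1

theorem IsLapEigenpair.dirichletEnergy_eq {l : ℝ} {φ : V → ℝ} (h : G.IsLapEigenpair l φ) :
    G.dirichletEnergy φ = l * ∑ v, φ v ^ 2 := by
  rw [← dotProduct_lapMatrix_mulVec, h.2, dotProduct_smul, smul_eq_mul]
  simp [dotProduct, sq]

theorem IsTree.mul_diam_sq_le_twelve {l : ℝ} (hT : G.IsTree) (hl : G.IsSecondLapEigenvalue l) :
    l * G.diam ^ 2 ≤ 12 := by
  rcases Nat.eq_zero_or_pos G.diam with hD | hD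
  · simp [hD]
  have := hT.connected.nonempty
  obtain ⟨x, y, hxy⟩ := G.exists_dist_eq_diam
  obtain ⟨p, hp⟩ := hT.connected.exists_walk_length_eq_dist x y
  obtain ⟨c, hc⟩ : ∃ c : ℝ, ∑ v, (G.distDiff x y v - c) = 0 :=
    ⟨(∑ v, G.distDiff x y v) / Fintype.card V, by
      rw [sum_sub_distrib, sum_const, card_univ, nsmul_eq_mul,
        mul_div_cancel₀ _ (Nat.cast_ne_zero.2 Fintype.card_ne_zero), sub_self]⟩
  have hray := hl.mul_sum_sq_le_dirichletEnergy hT.connected hc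
  rw [dirichletEnergy_sub_const] at hray
  have hvar := cube_div_three_le_sum_sq_distDiff_sub hp c
  have henergy := hT.dirichletEnergy_distDiff_le p
  rw [hp, hxy] at hvar henergy
  have hD' : (0 : ℝ) < G.diam := by exact_mod_cast hD
  refine le_of_mul_le_mul_right ?_ hD'
  nlinarith [mul_le_mul_of_nonneg_left hvar hl.2.1.le]

end Energy

end SimpleGraph

theorem sum_posPart_fiedler_ge_sqrt_diam_div_eight_general {V : Type*} [Fintype V] [DecidableEq V]
    (G : SimpleGraph V) [DecidableRel G.Adj] (hT : G.IsTree)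
    (l : ℝ) (hl : G.IsSecondLapEigenvalue l) (φ : V → ℝ)
    (hpair : G.IsLapEigenpair l φ) (hnorm : ∑ v : V, φ v ^ 2 = 1) :
    Real.sqrt (G.diam : ℝ) / 8 ≤ ∑ v : V, max (φ v) 0 ∧
      Real.sqrt (G.diam : ℝ) / 8 ≤ ∑ v : V, max (-φ v) 0 := by
  have := hT.connected.nonempty
  have hsum := hpair.sum_eq_zero hl.2.1.ne'
  obtain ⟨a, -, ha⟩ := exists_max_image univ φ univ_nonempty
  obtain ⟨b, -, hb⟩ := exists_min_image univ φ univ_nonempty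
  set S := ∑ v, max (φ v) 0
  have hmass : 1 ≤ (φ a - φ b) * S :=
    hnorm ▸ sum_sq_le_mul_sum_max_zero hsum (fun v => ha v (mem_univ v))
      (fun v => hb v (mem_univ v))
  have hrange := hT.connected.sq_sub_le_diam_mul_dirichletEnergy φ a b
  rw [hpair.dirichletEnergy_eq, hnorm, mul_one] at hrange
  have hspec := hT.mul_diam_sq_le_twelve hl
  have hS : 0 ≤ S := sum_nonneg fun v _ => le_max_right _ _
  set s := Real.sqrt (G.diam : ℝ)
  have hs : s ^ 2 = G.diam := Real.sq_sqrt (Nat.cast_nonneg _)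
  have hsr : s * (φ a - φ b) ≤ 8 := by
    have : (s * (φ a - φ b)) ^ 2 ≤ 12 := by
      rw [mul_pow, hs]
      nlinarith [mul_le_mul_of_nonneg_left hrange (Nat.cast_nonneg (α := ℝ) G.diam)]
    nlinarith
  have hpos : s / 8 ≤ S := by
    nlinarith [mul_le_mul_of_nonneg_left hmass (Real.sqrt_nonneg (G.diam : ℝ)),
      mul_le_mul_of_nonneg_right hsr hS]
  exact ⟨hpos, (sum_max_neg_zero_eq_sum_max_zero hsum).symm ▸ hpos⟩

/-- For a finite tree on at least two vertices, the positive and negative parts of a unit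
Fiedler vector each have `ℓ¹`-mass at least `diam(G)^{1/2} / 8`. -/
theorem sum_posPart_fiedler_ge_sqrt_diam_div_eight {V : Type*} [Fintype V] [DecidableEq V]
    (G : SimpleGraph V) [DecidableRel G.Adj] (hT : G.IsTree) (hcard : 2 ≤ Fintype.card V)
    (l : ℝ) (hl : G.IsSecondLapEigenvalue l) (φ : V → ℝ)
    (hpair : G.IsLapEigenpair l φ) (hnorm : ∑ v : V, φ v ^ 2 = 1) :
    Real.sqrt (G.diam : ℝ) / 8 ≤ ∑ v : V, max (φ v) 0 ∧
      Real.sqrt (G.diam : ℝ) / 8 ≤ ∑ v : V, max (-φ v) 0 :=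
  sum_posPart_fiedler_ge_sqrt_diam_div_eight_general G hT l hl φ hpair hnorm
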